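/- arXiv:1908.06448 — 2 statements merged into one kernel-verified Lean document; each statement's English description precedes it below -/
import Mathlib

section
/- For every g ≥ 1, the number h_g of Apéry half-factorial numerical semigroups of genus g satisfies h_g ≥ f_{g+1}, where f_n denotes the n-th Fibonacci number (f_1 = f_2 = 1). -/
/-- A numerical semigroup: a cofinite additive submonoid of ℕ. -/
def IsNumericalSemigroup (S : Set ℕ) : Prop :=
  0 ∈ S ∧ (∀ a ∈ S, ∀ b ∈ S, a + b ∈ S) ∧ (Sᶜ : Set ℕ).Finite

/-- The multiplicity: the smallest nonzero element. -/
noncomputable def mult (S : Set ℕ) : ℕ := sInf {n | n ∈ S ∧ n ≠ 0}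

/-- The Apéry set of `S` with respect to `m`: elements `x ∈ S` with `x - m ∉ S`. -/
def Apery (S : Set ℕ) (m : ℕ) : Set ℕ :=
  {x | x ∈ S ∧ ¬∃ y ∈ S, x = y + m}

/-- The atoms of `S`: nonzero elements not a sum of two nonzero elements of `S`. -/
def Atoms (S : Set ℕ) : Set ℕ :=
  {x | x ∈ S ∧ x ≠ 0 ∧ ¬∃ a ∈ S, ∃ b ∈ S, a ≠ 0 ∧ b ≠ 0 ∧ x = a + b}

/-- The set of factorization lengths of `n` over the atom set `A`. -/
def FactLens (A : Set ℕ) (n : ℕ) : Set ℕ :=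
  {L | ∃ c : ℕ →₀ ℕ, (↑c.support : Set ℕ) ⊆ A ∧
    c.sum (fun x k => k * x) = n ∧ c.sum (fun _ k => k) = L}

/-- `n` is half-factorial: all factorization lengths agree. -/
def HalfFactorial (A : Set ℕ) (n : ℕ) : Prop :=
  ∀ L₁ ∈ FactLens A n, ∀ L₂ ∈ FactLens A n, L₁ = L₂

/-- Elasticity: max factorization length over min, with `ρ(0) = 1`. -/
noncomputable def elasticity (A : Set ℕ) (n : ℕ) : ℚ :=
  if n = 0 then 1 else ((sSup (FactLens A n) : ℕ) : ℚ) / ((sInf (FactLens A n) : ℕ) : ℚ)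

/-- `S` is Apéry half-factorial. -/
def AHF (S : Set ℕ) : Prop := ∀ n ∈ Apery S (mult S), HalfFactorial (Atoms S) n

/-!
Fix `k` and a set `B ⊆ {0, …, k-1}`. Removing the gaps `{1, …, k} ∪ (k + 2 + B)` from `ℕ` gives a
numerical semigroup of multiplicity `m = k + 1` and genus `k + |B|`, since every gap lies below
`2m`. Its Apéry elements lie below `3m`, so they have no factorization of length `≥ 3`, and a
factorization of length `≤ 2` has length `0`, `1` or `2` according as the element is `0`, an atom,
or neither: these semigroups are Apéry half-factorial. Distinct `(k, B)` give distinct semigroups,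
and there are `∑ₖ C(k, g - k) = f_{g+1}` pairs of genus `g`.
-/

open Finset

lemma exists_multiset_of_mem_factLens {A : Set ℕ} {n L : ℕ} (h : L ∈ FactLens A n) :
    ∃ M : Multiset ℕ, (∀ x ∈ M, x ∈ A) ∧ M.sum = n ∧ Multiset.card M = L := by
  obtain ⟨c, hsupp, hsum, hlen⟩ := h
  refine ⟨c.toMultiset, fun x hx => hsupp ((Finsupp.mem_toMultiset _ _).1 hx), ?_, ?_⟩
  · rw [Finsupp.toMultiset_apply, Finsupp.multiset_sum_sum, ← hsum]
    refine Finsupp.sum_congr fun x _ => ?_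
    simp [Multiset.nsmul_singleton, Multiset.sum_replicate, mul_comm]
  · rw [Finsupp.card_toMultiset, ← hlen]
    rfl

lemma mul_le_of_mem_factLens {A : Set ℕ} {m n L : ℕ} (hA : ∀ a ∈ A, m ≤ a)
    (h : L ∈ FactLens A n) : L * m ≤ n := by
  obtain ⟨M, hMA, rfl, rfl⟩ := exists_multiset_of_mem_factLens h
  exact Multiset.card_nsmul_le_sum fun x hx => hA x (hMA x hx)

open Classical in
lemma factLen_eq_of_le_two {S : Set ℕ} {n L : ℕ} (h : L ∈ FactLens (Atoms S) n) (hL : L ≤ 2) :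
    L = if n = 0 then 0 else if n ∈ Atoms S then 1 else 2 := by
  obtain ⟨M, hMA, rfl, rfl⟩ := exists_multiset_of_mem_factLens h
  interval_cases hM : Multiset.card M
  · simp [Multiset.card_eq_zero.1 hM]
  · obtain ⟨a, rfl⟩ := Multiset.card_eq_one.1 hM
    have ha := hMA a (Multiset.mem_singleton_self a)
    simp [ha, ha.2.1]
  · obtain ⟨a, b, rfl⟩ := Multiset.card_eq_two.1 hM
    obtain ⟨haS, ha0, -⟩ := hMA a (by simp)
    obtain ⟨hbS, hb0, -⟩ := hMA b (by simp)
    have hab : ¬a + b ∈ Atoms S := fun h => h.2.2 ⟨a, haS, b, hbS, ha0, hb0, rfl⟩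
    simp [hab, ha0]

/-- Below `3m`, where `m` bounds the nonzero elements, nothing factors into three atoms. -/
lemma halfFactorial_atoms_of_lt {S : Set ℕ} {m n : ℕ} (hS : ∀ x ∈ S, x ≠ 0 → m ≤ x)
    (hn : n < 3 * m) : HalfFactorial (Atoms S) n := by
  have hA : ∀ a ∈ Atoms S, m ≤ a := fun a ha => hS a ha.1 ha.2.1
  have hle_two : ∀ L ∈ FactLens (Atoms S) n, L ≤ 2 := fun L hL => by
    have := mul_le_of_mem_factLens hA hL
    by_contra! h
    nlinarith
  intro L₁ h₁ L₂ h₂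
  rw [factLen_eq_of_le_two h₁ (hle_two L₁ h₁), factLen_eq_of_le_two h₂ (hle_two L₂ h₂)]

lemma add_one_le_two_mul_genus {S : Set ℕ} (hS : IsNumericalSemigroup S) {n : ℕ} (hn : n ∉ S) :
    n + 1 ≤ 2 * (Sᶜ : Set ℕ).ncard := by
  obtain ⟨h0, hadd, hfin⟩ := hS
  rw [Set.ncard_eq_toFinset_card _ hfin]
  set G := hfin.toFinset
  have hnG : n ∈ G := hfin.mem_toFinset.2 hn
  -- for `0 < i < n`, one of `i` and `n - i` is a gap
  have hcover : Icc 1 (n - 1) ⊆ G.erase n ∪ (G.erase n).image (n - ·) := by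
    intro i hi
    rw [mem_Icc] at hi
    by_cases hiS : i ∈ S
    · have hniS : n - i ∉ S := fun h => hn (Nat.add_sub_of_le (by omega : i ≤ n) ▸ hadd i hiS _ h)
      exact mem_union_right _ (mem_image.2
        ⟨n - i, mem_erase.2 ⟨by omega, hfin.mem_toFinset.2 hniS⟩, by omega⟩)
    · exact mem_union_left _ (mem_erase.2 ⟨by omega, hfin.mem_toFinset.2 hiS⟩)
  have hcard := (card_le_card hcover).trans ((card_union_le _ _).trans
    (Nat.add_le_add_left card_image_le _))
  rw [Nat.card_Icc, card_erase_of_mem hnG] at hcard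
  have hn0 : n ≠ 0 := fun h => hn (h ▸ h0)
  have hG : 1 ≤ G.card := card_pos.2 ⟨n, hnG⟩
  omega

lemma finite_setOf_genus_eq (g : ℕ) :
    {S : Set ℕ | IsNumericalSemigroup S ∧ (Sᶜ : Set ℕ).ncard = g}.Finite := by
  refine ((Set.finite_Iic (2 * g)).finite_subsets.preimage compl_injective.injOn).subset ?_
  rintro S ⟨hS, rfl⟩ n hn
  have := add_one_le_two_mul_genus hS hn
  simp only [Set.mem_Iic]
  omega

section DepthTwo

variable {k n : ℕ} {B : Finset ℕ}

-- With `B ⊆ range k` these are the numerical semigroups of multiplicity `k + 1` whose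
-- Frobenius number is below `2 (k + 1)`.
def depthTwoGaps (k : ℕ) (B : Finset ℕ) : Finset ℕ :=
  Icc 1 k ∪ B.map (addLeftEmbedding (k + 2))

def depthTwo (k : ℕ) (B : Finset ℕ) : Set ℕ :=
  (↑(depthTwoGaps k B) : Set ℕ)ᶜ

lemma mem_depthTwoGaps : n ∈ depthTwoGaps k B ↔ (1 ≤ n ∧ n ≤ k) ∨ ∃ b ∈ B, k + 2 + b = n := by
  simp [depthTwoGaps]

lemma mem_depthTwo : n ∈ depthTwo k B ↔ n ∉ depthTwoGaps k B := Iff.rfl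

lemma compl_depthTwo : (depthTwo k B)ᶜ = ↑(depthTwoGaps k B) := compl_compl _

lemma zero_mem_depthTwo : 0 ∈ depthTwo k B := by
  simp only [mem_depthTwo, mem_depthTwoGaps]
  omega

lemma succ_mem_depthTwo : k + 1 ∈ depthTwo k B := by
  simp only [mem_depthTwo, mem_depthTwoGaps]
  omega

lemma le_of_mem_depthTwo (h : n ∈ depthTwo k B) (hn : n ≠ 0) : k + 1 ≤ n := by
  by_contra! h'
  exact h (mem_depthTwoGaps.2 (Or.inl ⟨by omega, by omega⟩))

lemma mem_depthTwo_of_le (hB : B ⊆ range k) (h : 2 * k + 2 ≤ n) : n ∈ depthTwo k B := by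
  rintro hn
  obtain ⟨-, hnk⟩ | ⟨b, hb, rfl⟩ := mem_depthTwoGaps.1 hn
  · omega
  · have := mem_range.1 (hB hb)
    omega

lemma isNumericalSemigroup_depthTwo (hB : B ⊆ range k) : IsNumericalSemigroup (depthTwo k B) := by
  refine ⟨zero_mem_depthTwo, fun a ha b hb => ?_,
    compl_depthTwo ▸ (depthTwoGaps k B).finite_toSet⟩
  rcases eq_or_ne a 0 with rfl | ha0
  · simpa using hb
  rcases eq_or_ne b 0 with rfl | hb0
  · simpa using ha
  have := le_of_mem_depthTwo ha ha0
  have := le_of_mem_depthTwo hb hb0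
  exact mem_depthTwo_of_le hB (by omega)

lemma genus_depthTwo : ((depthTwo k B)ᶜ : Set ℕ).ncard = k + B.card := by
  rw [compl_depthTwo, Set.ncard_coe_finset, depthTwoGaps, card_union_of_disjoint,
    Nat.card_Icc, card_map, Nat.add_sub_cancel]
  simp only [disjoint_left, mem_Icc, mem_map, addLeftEmbedding_apply]
  omega

lemma mult_depthTwo : mult (depthTwo k B) = k + 1 := by
  have hmem : k + 1 ∈ {n | n ∈ depthTwo k B ∧ n ≠ 0} := ⟨succ_mem_depthTwo, k.succ_ne_zero⟩
  exact le_antisymm (Nat.sInf_le hmem) (le_csInf ⟨_, hmem⟩ fun n hn => le_of_mem_depthTwo hn.1 hn.2)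

lemma depthTwo_injective :
    Function.Injective fun p : (_ : ℕ) × Finset ℕ => depthTwo p.1 p.2 := by
  rintro ⟨k, B⟩ ⟨k', B'⟩ h
  dsimp only at h
  -- the multiplicity recovers `k`, and then `b ∈ B` iff `k + 2 + b` is a gap
  obtain rfl : k = k' := by
    have := congrArg mult h
    rw [mult_depthTwo, mult_depthTwo] at this
    omega
  have hB : ∀ {C : Finset ℕ} {b : ℕ}, b ∈ C ↔ k + 2 + b ∉ depthTwo k C := fun {C b} => by
    rw [mem_depthTwo, not_not, mem_depthTwoGaps]
    constructor
    · exact fun hb => Or.inr ⟨b, hb, rfl⟩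
    · rintro (⟨-, hbk⟩ | ⟨c, hc, hcb⟩)
      · omega
      · rwa [show b = c by omega]
  congr 1
  ext b
  rw [hB, hB, h]

/-- Apéry elements are below `3m`, since `n - m ∈ S` once `n - m ≥ 2m`. -/
lemma ahf_depthTwo (hB : B ⊆ range k) : AHF (depthTwo k B) := by
  rintro n ⟨-, hnAp⟩
  rw [mult_depthTwo] at hnAp
  refine halfFactorial_atoms_of_lt (m := k + 1) (fun x hx hx0 => le_of_mem_depthTwo hx hx0) ?_
  by_contra! h
  exact hnAp ⟨n - (k + 1), mem_depthTwo_of_le hB (by omega), by omega⟩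

def depthTwoParams (g : ℕ) : Finset ((_ : ℕ) × Finset ℕ) :=
  (range (g + 1)).sigma fun k => (range k).powersetCard (g - k)

lemma card_depthTwoParams (g : ℕ) : (depthTwoParams g).card = Nat.fib (g + 1) := by
  rw [Nat.fib_succ_eq_sum_choose, Nat.sum_antidiagonal_eq_sum_range_succ_mk, depthTwoParams,
    card_sigma]
  simp only [card_powersetCard, card_range]

lemma depthTwo_mem_of_mem_depthTwoParams {g : ℕ} {p : (_ : ℕ) × Finset ℕ}
    (hp : p ∈ depthTwoParams g) :
    depthTwo p.1 p.2 ∈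
      {S : Set ℕ | IsNumericalSemigroup S ∧ (Sᶜ : Set ℕ).ncard = g ∧ AHF S} := by
  obtain ⟨hk, hB, hcard⟩ : p.1 < g + 1 ∧ p.2 ⊆ range p.1 ∧ p.2.card = g - p.1 := by
    simpa [depthTwoParams, mem_powersetCard] using hp
  exact ⟨isNumericalSemigroup_depthTwo hB, by rw [genus_depthTwo]; omega, ahf_depthTwo hB⟩

end DepthTwo

theorem fib_le_num_AHF_general (g : ℕ) :
    Nat.fib (g + 1) ≤
      {S : Set ℕ | IsNumericalSemigroup S ∧ (Sᶜ : Set ℕ).ncard = g ∧ AHF S}.ncard := by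
  rw [← card_depthTwoParams, ← Set.ncard_coe_finset]
  exact Set.ncard_le_ncard_of_injOn _ (fun p hp => depthTwo_mem_of_mem_depthTwoParams hp)
    depthTwo_injective.injOn
    ((finite_setOf_genus_eq g).subset fun S hS => ⟨hS.1, hS.2.1⟩)

theorem fib_le_num_AHF (g : ℕ) (hg : 1 ≤ g) :
    Nat.fib (g + 1) ≤
      {S : Set ℕ | IsNumericalSemigroup S ∧ (Sᶜ : Set ℕ).ncard = g ∧ AHF S}.ncard :=
  fib_le_num_AHF_general g
end

section
/- Let S be a numerical semigroup with embedding dimension e(S) = m(S) − 2, where m(S) is the multiplicity. Then every element of Ap(S) has elasticity 1 or 3/2; that is, R(Ap(S)) ⊆ {1, 3/2}. -/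
/-!
The atoms of `S` other than `m = m(S)` all lie in `Ap(S)`, so `Ap(S) \ {0}` contains exactly
`m - e` non-atoms. If `n ∈ Ap(S)` factors as `a₁ + ⋯ + a_k`, each tail sum `a_i + ⋯ + a_k` with
`i < k` is a summand of `n`, hence again in `Ap(S)`, and is a nonzero non-atom; these tail sums
strictly increase, so `k ≤ m - e + 1`, which is `3` when `e = m - 2`. A non-atom needs at least two
atoms, so every factorization length of a non-atom of `Ap(S)` is `2` or `3`.
-/

theorem mem_factLens_iff {A : Set ℕ} {n L : ℕ} :
    L ∈ FactLens A n ↔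
      ∃ s : Multiset ℕ, (∀ a ∈ s, a ∈ A) ∧ s.sum = n ∧ Multiset.card s = L := by
  classical
  rw [FactLens, Set.mem_ofPred_eq, Multiset.toFinsupp.surjective.exists]
  refine exists_congr fun s => ?_
  have hsum := Finsupp.sum_toMultiset (Multiset.toFinsupp s)
  have hcard := Finsupp.card_toMultiset (Multiset.toFinsupp s)
  simp only [Multiset.toFinsupp_toMultiset, smul_eq_mul] at hsum hcard
  rw [hsum, hcard]
  exact and_congr (by simp [Set.subset_def, Multiset.toFinsupp_support]) Iff.rfl

theorem elasticity_eq_one_or_three_halves {A : Set ℕ} {n : ℕ} (hne : (FactLens A n).Nonempty)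
    (hsub : FactLens A n ⊆ Set.Icc 2 3) :
    elasticity A n = 1 ∨ elasticity A n = 3 / 2 := by
  unfold elasticity
  split_ifs
  · exact Or.inl rfl
  have hsup := Nat.sSup_mem hne ⟨3, fun L hL => (hsub hL).2⟩
  have hle : sInf (FactLens A n) ≤ sSup (FactLens A n) := Nat.sInf_le hsup
  obtain ⟨hsup₁, hsup₂⟩ := hsub hsup
  obtain ⟨hinf₁, hinf₂⟩ := hsub (Nat.sInf_mem hne)
  interval_cases sSup (FactLens A n) <;> interval_cases sInf (FactLens A n) <;> norm_num

section

variable {S : Set ℕ} {m : ℕ}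

theorem exists_multiset_atoms_sum_eq {x : ℕ} (hx : x ∈ S) :
    ∃ s : Multiset ℕ, (∀ a ∈ s, a ∈ Atoms S) ∧ s.sum = x := by
  induction x using Nat.strong_induction_on with
  | _ x ih =>
  by_cases hxA : x ∈ Atoms S
  · exact ⟨{x}, by simpa using hxA, Multiset.sum_singleton x⟩
  rcases eq_or_ne x 0 with rfl | hx0
  · exact ⟨0, by simp, rfl⟩
  obtain ⟨a, ha, b, hb, ha0, hb0, rfl⟩ : ∃ a ∈ S, ∃ b ∈ S, a ≠ 0 ∧ b ≠ 0 ∧ x = a + b := by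
    by_contra h
    exact hxA ⟨hx, hx0, h⟩
  obtain ⟨s, hs, rfl⟩ := ih a (by omega) ha
  obtain ⟨t, ht, rfl⟩ := ih b (by omega) hb
  exact ⟨s + t, fun c hc => (Multiset.mem_add.1 hc).elim (hs c) (ht c), Multiset.sum_add s t⟩

theorem sum_mem_of_forall_mem_atoms (hadd : ∀ a ∈ S, ∀ b ∈ S, a + b ∈ S) {t : Multiset ℕ}
    (ht : ∀ b ∈ t, b ∈ Atoms S) (ht0 : t ≠ 0) : t.sum ∈ S ∧ t.sum ≠ 0 := by
  obtain ⟨b, hb⟩ := Multiset.exists_mem_of_ne_zero ht0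
  refine ⟨Multiset.sum_induction_nonempty (· ∈ S) (fun a b ha hb => hadd a ha b hb) ht0
    fun b hb => (ht b hb).1, ?_⟩
  exact (Nat.pos_of_ne_zero (ht b hb).2.1 |>.trans_le (Multiset.le_sum_of_mem hb)).ne'

theorem add_sum_notMem_atoms (hadd : ∀ a ∈ S, ∀ b ∈ S, a + b ∈ S) {a : ℕ} {t : Multiset ℕ}
    (ha : a ∈ Atoms S) (ht : ∀ b ∈ t, b ∈ Atoms S) (ht0 : t ≠ 0) : a + t.sum ∉ Atoms S :=
  fun h => h.2.2 ⟨a, ha.1, t.sum, (sum_mem_of_forall_mem_atoms hadd ht ht0).1, ha.2.1,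
    (sum_mem_of_forall_mem_atoms hadd ht ht0).2, rfl⟩

theorem factLens_atoms_eq_singleton_one (hadd : ∀ a ∈ S, ∀ b ∈ S, a + b ∈ S) {x : ℕ}
    (hx : x ∈ Atoms S) : FactLens (Atoms S) x = {1} := by
  ext L
  rw [mem_factLens_iff, Set.mem_singleton_iff]
  constructor
  · rintro ⟨s, hs, rfl, rfl⟩
    induction s using Multiset.induction with
    | empty => exact absurd Multiset.sum_zero hx.2.1
    | cons a t _ =>
      rcases eq_or_ne t 0 with rfl | ht0
      · rfl
      rw [Multiset.sum_cons] at hx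
      exact absurd hx (add_sum_notMem_atoms hadd (hs a (Multiset.mem_cons_self a t))
        (fun b hb => hs b (Multiset.mem_cons_of_mem hb)) ht0)
  · rintro rfl
    exact ⟨{x}, by simpa using hx, Multiset.sum_singleton x, Multiset.card_singleton x⟩

theorem add_mul_mem (hadd : ∀ a ∈ S, ∀ b ∈ S, a + b ∈ S) {x : ℕ} (hx : x ∈ S) (hm : m ∈ S)
    (k : ℕ) : x + k * m ∈ S := by
  induction k with
  | zero => simpa using hx
  | succ k ih => simpa [add_mul, ← add_assoc] using hadd _ ih _ hm

theorem zero_mem_apery (h0 : 0 ∈ S) (hm0 : m ≠ 0) : 0 ∈ Apery S m :=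
  ⟨h0, fun ⟨_, _, hy⟩ => hm0 (by omega)⟩

theorem self_notMem_apery (h0 : 0 ∈ S) : m ∉ Apery S m :=
  fun h => h.2 ⟨0, h0, (zero_add m).symm⟩

theorem mem_apery_of_add_mem_apery (hadd : ∀ a ∈ S, ∀ b ∈ S, a + b ∈ S) {y z : ℕ}
    (hy : y ∈ S) (hz : z ∈ S) (h : y + z ∈ Apery S m) : z ∈ Apery S m :=
  ⟨hz, fun ⟨w, hw, hzw⟩ => h.2 ⟨y + w, hadd y hy w hw, by omega⟩⟩

theorem injOn_mod_apery (hadd : ∀ a ∈ S, ∀ b ∈ S, a + b ∈ S) (hm : m ∈ S) :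
    Set.InjOn (· % m) (Apery S m) := by
  suffices key : ∀ x ∈ Apery S m, ∀ y ∈ Apery S m, x % m = y % m → x ≤ y → x = y from
    fun x hx y hy hxy => (le_total x y).elim (key x hx y hy hxy)
      fun hyx => (key y hy x hx hxy.symm hyx).symm
  intro x hx y hy hmod hxy
  obtain ⟨k, hk⟩ : m ∣ y - x := (Nat.modEq_iff_dvd' hxy).1 hmod
  cases k with
  | zero => omega
  | succ k =>
    refine absurd ⟨x + k * m, add_mul_mem hadd hx.1 hm k, ?_⟩ hy.2
    have := Nat.sub_add_cancel hxy
    linarith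

theorem exists_mem_apery_mod_eq (hfin : (Sᶜ : Set ℕ).Finite) {r : ℕ} (hr : r < m) :
    ∃ x ∈ Apery S m, x % m = r := by
  classical
  obtain ⟨N, hN⟩ := hfin.bddAbove
  have hne : ∃ x, x ∈ S ∧ x % m = r := by
    refine ⟨r + (N + 1) * m, by_contra fun h => ?_, by simp [Nat.mod_eq_of_lt hr]⟩
    have := hN h
    nlinarith
  refine ⟨Nat.find hne, ⟨(Nat.find_spec hne).1, ?_⟩, (Nat.find_spec hne).2⟩
  rintro ⟨y, hy, hfy⟩
  refine Nat.find_min hne (show y < Nat.find hne by omega) ⟨hy, ?_⟩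
  rw [← (Nat.find_spec hne).2, hfy, Nat.add_mod_right]

theorem atoms_subset_insert_apery (hm : m ∈ S) (hm0 : m ≠ 0) :
    Atoms S ⊆ insert m (Apery S m) := by
  intro a ha
  by_contra h
  rw [Set.mem_insert_iff, not_or] at h
  obtain ⟨y, hy, rfl⟩ : ∃ y ∈ S, a = y + m := by
    by_contra h'
    exact h.2 ⟨ha.1, h'⟩
  have hy0 : y ≠ 0 := by
    rintro rfl
    exact h.1 (zero_add m)
  exact ha.2.2 ⟨y, hy, m, hm, hy0, hm0, rfl⟩

def aperyNonAtoms (S : Set ℕ) (m : ℕ) : Set ℕ :=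
  Apery S m \ insert 0 (Atoms S)

theorem card_le_ncard_aperyNonAtoms_inter_Iic (hadd : ∀ a ∈ S, ∀ b ∈ S, a + b ∈ S)
    {s : Multiset ℕ} (hs : ∀ a ∈ s, a ∈ Atoms S) (hsum : s.sum ∈ Apery S m) :
    Multiset.card s ≤ (aperyNonAtoms S m ∩ Set.Iic s.sum).ncard + 1 := by
  induction s using Multiset.induction with
  | empty => simp
  | cons a t ih =>
    have ha := hs a (Multiset.mem_cons_self a t)
    have ht : ∀ b ∈ t, b ∈ Atoms S := fun b hb => hs b (Multiset.mem_cons_of_mem hb)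
    rw [Multiset.sum_cons] at hsum ⊢
    rcases eq_or_ne t 0 with rfl | ht0
    · simp
    obtain ⟨htS, ht0'⟩ := sum_mem_of_forall_mem_atoms hadd ht ht0
    have hlt : t.sum < a + t.sum := by
      have := ha.2.1
      omega
    have hmem : a + t.sum ∈ aperyNonAtoms S m := by
      refine ⟨hsum, ?_⟩
      rintro (h | h)
      · omega
      · exact add_sum_notMem_atoms hadd ha ht ht0 h
    have hfin : (aperyNonAtoms S m ∩ Set.Iic t.sum).Finite := (Set.finite_Iic _).inter_of_right _
    calc Multiset.card (a ::ₘ t) = Multiset.card t + 1 := Multiset.card_cons a t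
      _ ≤ (aperyNonAtoms S m ∩ Set.Iic t.sum).ncard + 1 + 1 := by
        gcongr
        exact ih ht (mem_apery_of_add_mem_apery hadd ha.1 htS hsum)
      _ = (insert (a + t.sum) (aperyNonAtoms S m ∩ Set.Iic t.sum)).ncard + 1 := by
        rw [Set.ncard_insert_of_notMem (fun h => hlt.not_ge h.2) hfin]
      _ ≤ (aperyNonAtoms S m ∩ Set.Iic (a + t.sum)).ncard + 1 := by
        refine Nat.add_le_add_right
          (Set.ncard_le_ncard ?_ ((Set.finite_Iic _).inter_of_right _)) 1
        exact Set.insert_subset ⟨hmem, Set.self_mem_Iic⟩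
          (Set.inter_subset_inter_right _ (Set.Iic_subset_Iic.2 hlt.le))

namespace IsNumericalSemigroup

theorem ncard_apery (hS : IsNumericalSemigroup S) (hm : m ∈ S) (hm0 : m ≠ 0) :
    (Apery S m).ncard = m := by
  have hbij : Set.BijOn (· % m) (Apery S m) (Set.Iio m) :=
    ⟨fun x _ => Nat.mod_lt x (Nat.pos_of_ne_zero hm0), injOn_mod_apery hS.2.1 hm,
      fun _ hr => exists_mem_apery_mod_eq hS.2.2 hr⟩
  rw [hbij.ncard_eq, Set.ncard_Iio_nat]

theorem finite_apery (hS : IsNumericalSemigroup S) (hm : m ∈ S) (hm0 : m ≠ 0) :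
    (Apery S m).Finite :=
  Set.finite_of_ncard_ne_zero (by rwa [hS.ncard_apery hm hm0])

theorem mult_mem_atoms (hS : IsNumericalSemigroup S) : mult S ∈ Atoms S := by
  obtain ⟨x, hx, hx0⟩ := (by simpa using hS.2.2.infinite_compl : S.Infinite).exists_gt 0
  have hmin : mult S ∈ S ∧ mult S ≠ 0 :=
    Nat.sInf_mem (s := {n | n ∈ S ∧ n ≠ 0}) ⟨x, hx, hx0.ne'⟩
  refine ⟨hmin.1, hmin.2, fun ⟨a, ha, b, hb, ha0, hb0, hab⟩ => ?_⟩
  have : mult S ≤ a := Nat.sInf_le ⟨ha, ha0⟩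
  omega

theorem ncard_aperyNonAtoms (hS : IsNumericalSemigroup S) (hm : m ∈ Atoms S) :
    (aperyNonAtoms S m).ncard = m - (Atoms S).ncard := by
  have hAp := hS.finite_apery hm.1 hm.2.1
  have hsub : insert 0 (Atoms S) ⊆ insert m (Apery S m) :=
    Set.insert_subset (Set.mem_insert_of_mem _ (zero_mem_apery hS.1 hm.2.1))
      (atoms_subset_insert_apery hm.1 hm.2.1)
  have hfin : (insert 0 (Atoms S)).Finite := (hAp.insert m).subset hsub
  rw [aperyNonAtoms, ← Set.insert_sdiff_of_mem _ (Set.mem_insert_of_mem 0 hm),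
    Set.ncard_sdiff hsub hfin, Set.ncard_insert_of_notMem (self_notMem_apery hS.1) hAp,
    Set.ncard_insert_of_notMem (fun h => h.2.1 rfl) (hfin.subset (Set.subset_insert _ _)),
    hS.ncard_apery hm.1 hm.2.1, Nat.add_sub_add_right]

theorem factLens_subset_Icc (hS : IsNumericalSemigroup S) (hm : m ∈ S) (hm0 : m ≠ 0) {n : ℕ}
    (hn : n ∈ Apery S m) (hn0 : n ≠ 0) (hna : n ∉ Atoms S) :
    FactLens (Atoms S) n ⊆ Set.Icc 2 ((aperyNonAtoms S m).ncard + 1) := by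
  intro L hL
  obtain ⟨s, hs, rfl, rfl⟩ := mem_factLens_iff.1 hL
  refine ⟨?_, ?_⟩
  · by_contra! hlt
    rcases Nat.le_one_iff_eq_zero_or_eq_one.1 (Nat.lt_succ_iff.1 hlt) with h | h
    · exact hn0 (by rw [Multiset.card_eq_zero.1 h, Multiset.sum_zero])
    · obtain ⟨a, rfl⟩ := Multiset.card_eq_one.1 h
      exact hna (by simpa using hs a (Multiset.mem_singleton_self a))
  · have hfin : (aperyNonAtoms S m).Finite := (hS.finite_apery hm hm0).subset Set.sdiff_subset
    calc Multiset.card s ≤ (aperyNonAtoms S m ∩ Set.Iic s.sum).ncard + 1 :=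
          card_le_ncard_aperyNonAtoms_inter_Iic hS.2.1 hs hn
      _ ≤ (aperyNonAtoms S m).ncard + 1 :=
        Nat.add_le_add_right (Set.ncard_le_ncard Set.inter_subset_left hfin) 1

end IsNumericalSemigroup

end

theorem elasticity_embdim_mult_sub_two_general (S : Set ℕ) (hS : IsNumericalSemigroup S)
    (h : (Atoms S).ncard = mult S - 2) :
    ∀ n ∈ Apery S (mult S),
      elasticity (Atoms S) n = 1 ∨ elasticity (Atoms S) n = 3 / 2 := by
  intro n hn
  have hmA := hS.mult_mem_atoms
  by_cases hna : n ∈ Atoms S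
  · left
    simp [elasticity, hna.2.1, factLens_atoms_eq_singleton_one hS.2.1 hna]
  rcases eq_or_ne n 0 with rfl | hn0
  · simp [elasticity]
  have hcard : (aperyNonAtoms S (mult S)).ncard ≤ 2 := by
    rw [hS.ncard_aperyNonAtoms hmA, h]
    omega
  obtain ⟨s, hs, hsum⟩ := exists_multiset_atoms_sum_eq hn.1
  refine elasticity_eq_one_or_three_halves ⟨_, mem_factLens_iff.2 ⟨s, hs, hsum, rfl⟩⟩ ?_
  exact (hS.factLens_subset_Icc hmA.1 hmA.2.1 hn hn0 hna).trans
    (Set.Icc_subset_Icc le_rfl (by omega))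

theorem elasticity_embdim_mult_sub_two (S : Set ℕ) (hS : IsNumericalSemigroup S)
    (h : (Atoms S).ncard = mult S - 2) (hm : 3 ≤ mult S) :
    ∀ n ∈ Apery S (mult S),
      elasticity (Atoms S) n = 1 ∨ elasticity (Atoms S) n = 3 / 2 :=
  elasticity_embdim_mult_sub_two_general S hS h
end
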